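/- Let G be a minimal non-sum-perfect graph. Then max{α(G), ω(G)} ≤ 3, and hence |V(G)| ≤ 7. -/

import Mathlib

open SimpleGraph Finset

/-- The clique number of a finite graph: the largest `n` such that `G` has an `n`-clique. -/
noncomputable def omegaNum {V : Type*} [Fintype V] (G : SimpleGraph V) : ℕ :=
  sSup {n | ∃ s : Finset V, G.IsNClique n s}

/-- The stability (independence) number: the clique number of the complement. -/
noncomputable def alphaNum {V : Type*} [Fintype V] (G : SimpleGraph V) : ℕ :=
  omegaNum Gᶜ

/-- A graph is sum-perfect if every induced subgraph `H` satisfies `α(H) + ω(H) ≥ |V(H)|`. -/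
def SumPerfect {V : Type*} [Fintype V] (G : SimpleGraph V) : Prop :=
  ∀ s : Finset V, s.card ≤ alphaNum (G.induce (s : Set V)) + omegaNum (G.induce (s : Set V))

/-- `G` is minimally non-sum-perfect: not sum-perfect, but every proper induced subgraph is. -/
def MinimalNonSumPerfect {V : Type*} [Fintype V] (G : SimpleGraph V) : Prop :=
  ¬ SumPerfect G ∧ ∀ s : Finset V, s ≠ Finset.univ → SumPerfect (G.induce (s : Set V))

/-- `G` is threshold: there is an ordering of all vertices in which every vertex is adjacent
to all of the earlier vertices or to none of them. -/
def IsThreshold {V : Type*} [Fintype V] (G : SimpleGraph V) : Prop :=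
  ∃ L : List V, L.Nodup ∧ (∀ v : V, v ∈ L) ∧
    ∀ (i j k : ℕ) (hi : i < L.length) (hj : j < L.length) (hk : k < L.length),
      j < i → k < i →
        (G.Adj (L.get ⟨i, hi⟩) (L.get ⟨j, hj⟩) ↔ G.Adj (L.get ⟨i, hi⟩) (L.get ⟨k, hk⟩))

/-! Deleting a vertex of a minimal non-sum-perfect graph keeps `α` and `ω`, so the graph has
`α + ω + 1` vertices and every vertex is avoided both by a maximum clique and by a maximum
independent set. This is invariant under complementation, so it suffices to show `ω ≤ 3`.

Suppose `ω ≥ 4` and fix a maximum independent set `S`. A maximum clique avoiding `b ∉ S` meets `S`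
at most once, so it contains all but one vertex of `Sᶜ \ {b}`; as `|Sᶜ| = ω + 1 ≥ 5`, all non-edges
inside `Sᶜ` then pass through one vertex `d`, and `K = Sᶜ \ {d}` is a maximum clique. A maximum
independent set avoiding `s ∈ S` either trades `s` for a private neighbour of `s` (a vertex whose
only neighbour in `S` is `s`), or contains `d` and a non-neighbour `x ∈ K` of `d`, and then `d` and
`x` together have at most two neighbours in `S`. Maximum cliques avoiding the vertices of `K`
produce distinct vertices of `S`, each adjacent to almost all of `K`. Whether `d` has one, two or at
least three non-neighbours in `K`, these rule out the second alternative and leave at most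
`|S| - 1` vertices that can be private neighbours, a contradiction. -/

namespace Finset

variable {α : Type*}

lemma exists_mem_ne_of_five_le_card [DecidableEq α] {X : Finset α} (hX : 5 ≤ #X) (p q r t : α) :
    ∃ b ∈ X, b ≠ p ∧ b ≠ q ∧ b ≠ r ∧ b ≠ t := by
  have : #({p, q, r, t} : Finset α) < #X := card_le_four.trans_lt (by omega)
  obtain ⟨b, hb, hbn⟩ := exists_mem_notMem_of_card_lt_card this
  exact ⟨b, hb, by simp_all⟩

lemma card_compl_erase_sdiff [Fintype α] [DecidableEq α] {S Q : Finset α} {b : α} (hbQ : b ∉ Q)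
    (hQ : #Q = #(Sᶜ.erase b)) : #(Sᶜ.erase b \ Q) = #(Q ∩ S) := by
  have hinter : Sᶜ.erase b ∩ Q = Q \ S := by
    ext x
    simp only [mem_inter, mem_erase, mem_compl, mem_sdiff]
    exact ⟨fun h => ⟨h.2, h.1.2⟩, fun h => ⟨⟨fun hx => hbQ (hx ▸ h.1), h.2⟩, h.1⟩⟩
  have h₁ := card_sdiff_add_card_inter (Sᶜ.erase b) Q
  have h₂ := card_inter_add_card_sdiff Q S
  rw [hinter] at h₁
  omega

end Finset

namespace SimpleGraph

variable {V W : Type*} {G : SimpleGraph V}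

lemma induce_compl (s : Set V) : (G.induce s)ᶜ = Gᶜ.induce s := by
  ext a b
  simp [Subtype.ext_iff]

lemma Embedding.cliqueNum_le [Finite W] {H : SimpleGraph W} (f : G ↪g H) :
    G.cliqueNum ≤ H.cliqueNum := by
  obtain ⟨s, hs⟩ := G.exists_isNClique_cliqueNum
  have hmap : G.map f.toEmbedding ≤ H :=
    (map_le_iff_le_comap _ _ _).2 fun _ _ hab => f.map_rel_iff.2 hab
  rw [← hs.card_eq, ← card_map f.toEmbedding]
  exact ((hs.map (f := f.toEmbedding)).mono hmap).isClique.card_le_cliqueNum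

lemma Iso.cliqueNum_eq [Finite V] [Finite W] {H : SimpleGraph W} (e : G ≃g H) :
    G.cliqueNum = H.cliqueNum :=
  le_antisymm e.toEmbedding.cliqueNum_le e.symm.toEmbedding.cliqueNum_le

lemma cliqueNum_induce_of_eq_univ [Finite V] {s : Set V} (hs : s = Set.univ) :
    (G.induce s).cliqueNum = G.cliqueNum := by
  subst hs
  exact G.induceUnivIso.cliqueNum_eq

lemma indepNum_induce_of_eq_univ [Finite V] {s : Set V} (hs : s = Set.univ) :
    (G.induce s).indepNum = G.indepNum := by
  rw [← cliqueNum_compl, induce_compl, cliqueNum_induce_of_eq_univ hs, cliqueNum_compl]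

lemma indepNum_induce_le [Finite V] (s : Set V) : (G.induce s).indepNum ≤ G.indepNum := by
  rw [← cliqueNum_compl, ← cliqueNum_compl, induce_compl]
  exact cliqueNum_induce_le s

lemma exists_isNClique_cliqueNum_induce (s : Set V) :
    ∃ t : Finset V, (t : Set V) ⊆ s ∧ G.IsNClique (G.induce s).cliqueNum t := by
  obtain ⟨t, ht⟩ := (G.induce s).exists_isNClique_cliqueNum
  refine ⟨t.map (.subtype _), ?_, (isNClique_induce_iff s t _).1 ht⟩
  intro x hx
  obtain ⟨y, -, rfl⟩ := Finset.mem_map.1 hx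
  exact y.2

lemma exists_isNIndepSet_indepNum_induce (s : Set V) :
    ∃ t : Finset V, (t : Set V) ⊆ s ∧ G.IsNIndepSet (G.induce s).indepNum t := by
  simpa [← cliqueNum_compl, induce_compl] using Gᶜ.exists_isNClique_cliqueNum_induce s

structure IsSumCritical [Fintype V] (G : SimpleGraph V) : Prop where
  card_eq : Fintype.card V = G.indepNum + G.cliqueNum + 1
  exists_isNClique_notMem (v : V) : ∃ K : Finset V, G.IsNClique G.cliqueNum K ∧ v ∉ K
  exists_isNIndepSet_notMem (v : V) : ∃ S : Finset V, G.IsNIndepSet G.indepNum S ∧ v ∉ S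

lemma IsSumCritical.compl [Fintype V] (h : G.IsSumCritical) : Gᶜ.IsSumCritical where
  card_eq := by rw [h.card_eq, cliqueNum_compl, indepNum_compl, add_comm G.cliqueNum]
  exists_isNClique_notMem v := by simpa using h.exists_isNIndepSet_notMem v
  exists_isNIndepSet_notMem v := by simpa using h.exists_isNClique_notMem v

end SimpleGraph

open SimpleGraph

section SumPerfect

variable {V : Type*} [Fintype V] {G : SimpleGraph V}

lemma omegaNum_eq_cliqueNum : omegaNum G = G.cliqueNum := rfl

lemma alphaNum_eq_indepNum : alphaNum G = G.indepNum := cliqueNum_compl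

lemma SumPerfect.card_le (h : SumPerfect G) : Fintype.card V ≤ G.indepNum + G.cliqueNum := by
  simpa [alphaNum_eq_indepNum, omegaNum_eq_cliqueNum, indepNum_induce_of_eq_univ coe_univ,
    cliqueNum_induce_of_eq_univ coe_univ] using h univ

lemma MinimalNonSumPerfect.isSumCritical (hG : MinimalNonSumPerfect G) : G.IsSumCritical := by
  classical
  obtain ⟨hns, hmin⟩ := hG
  have hlt : G.indepNum + G.cliqueNum < Fintype.card V := by
    by_contra! hle
    refine hns fun s => ?_
    by_cases hs : s = univ
    · subst hs
      simpa [alphaNum_eq_indepNum, omegaNum_eq_cliqueNum, indepNum_induce_of_eq_univ coe_univ,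
        cliqueNum_induce_of_eq_univ coe_univ] using hle
    · simpa [alphaNum_eq_indepNum, omegaNum_eq_cliqueNum] using (hmin s hs).card_le
  have hdel (v : V) : (G.induce (univ.erase v : Finset V)).indepNum = G.indepNum ∧
      (G.induce (univ.erase v : Finset V)).cliqueNum = G.cliqueNum ∧
      Fintype.card V = G.indepNum + G.cliqueNum + 1 := by
    have hsp := (hmin _ (univ.erase_ssubset (mem_univ v)).ne).card_le
    have hα := indepNum_induce_le (G := G) (univ.erase v : Finset V)
    have hω := cliqueNum_induce_le (G := G) (univ.erase v : Finset V)
    simp only [coe_sort_coe, Fintype.card_coe, card_erase_of_mem (mem_univ v), card_univ] at hsp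
    omega
  obtain ⟨v₀⟩ : Nonempty V := Fintype.card_pos_iff.1 (by omega)
  refine ⟨(hdel v₀).2.2, fun v => ?_, fun v => ?_⟩
  · obtain ⟨K, hKv, hK⟩ := exists_isNClique_cliqueNum_induce (G := G) (univ.erase v : Finset V)
    exact ⟨K, (hdel v).2.1 ▸ hK, fun h => by simpa using hKv h⟩
  · obtain ⟨S, hSv, hS⟩ := exists_isNIndepSet_indepNum_induce (G := G) (univ.erase v : Finset V)
    exact ⟨S, (hdel v).1 ▸ hS, fun h => by simpa using hSv h⟩

end SumPerfect

namespace SimpleGraph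

variable {V : Type*} {G : SimpleGraph V}

lemma IsClique.card_inter_le_one [DecidableEq V] {Q S : Finset V} (hQ : G.IsClique (Q : Set V))
    (hS : G.IsIndepSet (S : Set V)) : #(Q ∩ S) ≤ 1 := by
  refine card_le_one.2 fun a ha b hb => by_contra fun hab => ?_
  rw [mem_inter] at ha hb
  exact hS ha.2 hb.2 hab (hQ ha.1 hb.1 hab)

lemma card_image_of_not_adj_of_adj [DecidableEq V] {P : Finset V} {g : V → V}
    (hg : ∀ k ∈ P, ¬G.Adj (g k) k) (hgadj : ∀ k ∈ P, ∀ k' ∈ P, k ≠ k' → G.Adj (g k) k') :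
    #(P.image g) = #P :=
  card_image_of_injOn fun k₁ h₁ k₂ h₂ heq =>
    by_contra fun hne => hg k₂ h₂ (heq ▸ hgadj k₁ h₁ k₂ h₂ hne)

lemma notMem_image_of_not_adj_of_adj [DecidableEq V] {P : Finset V} {g : V → V} {s : V}
    (hg : ∀ k ∈ P, ¬G.Adj (g k) k) (hs : ∀ k ∈ P, G.Adj s k) : s ∉ P.image g := by
  rw [mem_image]
  rintro ⟨k, hk, rfl⟩
  exact hg k hk (hs k hk)

def CoversEdgesOn (H : SimpleGraph V) (X : Finset V) (e : V) : Prop :=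
  ∀ u ∈ X, ∀ v ∈ X, H.Adj u v → u = e ∨ v = e

section CoversEdgesOn

variable [DecidableEq V] {H : SimpleGraph V} {X : Finset V}

lemma eq_or_eq_of_forall_erase (hX : 5 ≤ #X) (h : ∀ b ∈ X, ∃ e, H.CoversEdgesOn (X.erase b) e)
    {u v p q : V} (hu : u ∈ X) (hv : v ∈ X) (hp : p ∈ X) (hq : q ∈ X) (huv : H.Adj u v)
    (hpq : H.Adj p q) : u = p ∨ u = q ∨ v = p ∨ v = q := by
  obtain ⟨b, hb, hbu, hbv, hbp, hbq⟩ := exists_mem_ne_of_five_le_card hX u v p q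
  obtain ⟨e, he⟩ := h b hb
  have h₁ := he u (mem_erase.2 ⟨hbu.symm, hu⟩) v (mem_erase.2 ⟨hbv.symm, hv⟩) huv
  have h₂ := he p (mem_erase.2 ⟨hbp.symm, hp⟩) q (mem_erase.2 ⟨hbq.symm, hq⟩) hpq
  clear he h
  grind

lemma not_adj_of_forall_erase (hX : 5 ≤ #X) (h : ∀ b ∈ X, ∃ e, H.CoversEdgesOn (X.erase b) e)
    {u v z : V} (hu : u ∈ X) (hv : v ∈ X) (hz : z ∈ X) (huv : H.Adj u v) (hvz : H.Adj v z) :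
    ¬H.Adj u z := by
  intro huz
  obtain ⟨b, hb, hbu, hbv, hbz, -⟩ := exists_mem_ne_of_five_le_card hX u v z z
  obtain ⟨e, he⟩ := h b hb
  have h₁ := he u (mem_erase.2 ⟨hbu.symm, hu⟩) v (mem_erase.2 ⟨hbv.symm, hv⟩) huv
  have h₂ := he v (mem_erase.2 ⟨hbv.symm, hv⟩) z (mem_erase.2 ⟨hbz.symm, hz⟩) hvz
  have h₃ := he u (mem_erase.2 ⟨hbu.symm, hu⟩) z (mem_erase.2 ⟨hbz.symm, hz⟩) huz
  have := huv.ne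
  have := hvz.ne
  have := huz.ne
  clear he h
  grind

/-- Any two edges meet and there is no triangle. So if neither end of an edge `uv` is a cover,
there are edges `vz` avoiding `u` and `uz` avoiding `v`, a triangle. -/
lemma exists_coversEdgesOn_of_forall_erase (hX : 5 ≤ #X)
    (h : ∀ b ∈ X, ∃ e, H.CoversEdgesOn (X.erase b) e) : ∃ d, H.CoversEdgesOn X d := by
  by_contra! hcov
  simp only [CoversEdgesOn, not_forall, not_or] at hcov
  obtain ⟨x, hx⟩ := card_pos.1 (by omega : 0 < #X)
  obtain ⟨u, hu, v, hv, huv, -⟩ := hcov x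
  obtain ⟨p, hp, q, hq, hpq, hpu, hqu⟩ := hcov u
  obtain ⟨z, hz, hvz, hzu⟩ : ∃ z ∈ X, H.Adj v z ∧ z ≠ u := by
    rcases eq_or_eq_of_forall_erase hX h hu hv hp hq huv hpq with rfl | rfl | rfl | rfl
    · exact absurd rfl hpu
    · exact absurd rfl hqu
    · exact ⟨q, hq, hpq, hqu⟩
    · exact ⟨p, hp, hpq.symm, hpu⟩
  obtain ⟨p', hp', q', hq', hpq', hpv, hqv⟩ := hcov v
  refine not_adj_of_forall_erase hX h hu hv hz huv hvz ?_
  have h₁ := eq_or_eq_of_forall_erase hX h hu hv hp' hq' huv hpq'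
  have h₂ := eq_or_eq_of_forall_erase hX h hv hz hp' hq' hvz hpq'
  have := hpq'.symm
  clear h hcov
  grind

end CoversEdgesOn

lemma IsClique.exists_coversEdgesOn_compl [DecidableEq V] [Nonempty V] {Q X : Finset V}
    (hQ : G.IsClique (Q : Set V)) (hXQ : #(X \ Q) ≤ 1) : ∃ e, Gᶜ.CoversEdgesOn X e := by
  obtain ⟨e, he⟩ := card_le_one_iff_subset_singleton.1 hXQ
  have hmem (x : V) (hx : x ∈ X) (hxQ : x ∉ Q) : x = e :=
    mem_singleton.1 (he (mem_sdiff.2 ⟨hx, hxQ⟩))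
  refine ⟨e, fun u hu v hv huv => ?_⟩
  by_cases huQ : u ∈ Q
  · by_cases hvQ : v ∈ Q
    · exact absurd (hQ huQ hvQ huv.ne) ((compl_adj G u v).1 huv).2
    · exact .inr (hmem v hv hvQ)
  · exact .inl (hmem u hu huQ)

section Critical

variable [Fintype V] {S K : Finset V} {v : V}

lemma IsNClique.exists_not_adj (hK : G.IsNClique G.cliqueNum K) (hv : v ∉ K) :
    ∃ c ∈ K, ¬G.Adj v c := by
  classical
  by_contra! hadj
  have hclique : G.IsClique (insert v K : Finset V) := by
    rw [coe_insert, isClique_insert]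
    exact ⟨hK.isClique, fun c hc _ => hadj c hc⟩
  have := hclique.card_le_cliqueNum
  rw [card_insert_of_notMem hv, hK.card_eq] at this
  omega

lemma IsNIndepSet.exists_adj (hS : G.IsNIndepSet G.indepNum S) (hv : v ∉ S) :
    ∃ t ∈ S, G.Adj v t := by
  obtain ⟨t, ht, hnadj⟩ :=
    IsNClique.exists_not_adj (G := Gᶜ) (by rwa [cliqueNum_compl, isNClique_compl]) hv
  exact ⟨t, ht, by simpa [ne_of_mem_of_not_mem ht hv |>.symm] using hnadj⟩

variable [DecidableEq V]

lemma IsSumCritical.exists_coversEdgesOn_compl_erase (hc : G.IsSumCritical)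
    (hS : G.IsNIndepSet G.indepNum S) {b : V} (hb : b ∉ S) :
    ∃ e, Gᶜ.CoversEdgesOn (Sᶜ.erase b) e := by
  have : Nonempty V := ⟨b⟩
  obtain ⟨Q, hQ, hbQ⟩ := hc.exists_isNClique_notMem b
  have hX : #(Sᶜ.erase b) = G.cliqueNum := by
    rw [card_erase_of_mem (mem_compl.2 hb), card_compl, hS.card_eq, hc.card_eq]
    omega
  refine hQ.isClique.exists_coversEdgesOn_compl ?_
  rw [card_compl_erase_sdiff hbQ (hQ.card_eq.trans hX.symm)]
  exact hQ.isClique.card_inter_le_one hS.isIndepSet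

/-- The vertices are split into a maximum independent set `S`, a maximum clique `K` and one more
vertex `d`. -/
structure IsNearSplit (G : SimpleGraph V) (S K : Finset V) (d : V) : Prop where
  isNIndepSet : G.IsNIndepSet G.indepNum S
  isNClique : G.IsNClique G.cliqueNum K
  compl_eq : Sᶜ = insert d K
  notMem : d ∉ K

lemma IsSumCritical.exists_isNearSplit (hc : G.IsSumCritical) (hw : 4 ≤ G.cliqueNum) :
    ∃ S K d, G.IsNearSplit S K d := by
  obtain ⟨S, hS⟩ := G.exists_isNIndepSet_indepNum
  have hcard : #Sᶜ = G.cliqueNum + 1 := by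
    rw [card_compl, hS.card_eq, hc.card_eq]
    omega
  obtain ⟨d, hd⟩ := exists_coversEdgesOn_of_forall_erase (H := Gᶜ) (by omega)
    fun b hb => hc.exists_coversEdgesOn_compl_erase hS (mem_compl.1 hb)
  have hK : G.IsClique (Sᶜ.erase d : Set V) := by
    intro u hu v hv huv
    simp only [coe_erase, Set.mem_sdiff, mem_coe, Set.mem_singleton_iff] at hu hv
    by_contra hnadj
    rcases hd u hu.1 v hv.1 ((compl_adj G u v).2 ⟨huv, hnadj⟩) with h | h
    exacts [hu.2 h, hv.2 h]
  have hdS : d ∈ Sᶜ := by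
    by_contra h
    have := hK.card_le_cliqueNum
    rw [erase_eq_of_notMem h] at this
    omega
  refine ⟨S, Sᶜ.erase d, d, hS, ⟨hK, ?_⟩, (insert_erase hdS).symm, notMem_erase d _⟩
  rw [card_erase_of_mem hdS]
  omega

end Critical

namespace IsNearSplit

variable [Fintype V] [DecidableEq V] {S K : Finset V} {d : V}

lemma notMem_iff (h : G.IsNearSplit S K d) {v : V} : v ∉ S ↔ v = d ∨ v ∈ K := by
  rw [← mem_compl, h.compl_eq, mem_insert]

lemma notMem_left (h : G.IsNearSplit S K d) : d ∉ S := h.notMem_iff.2 (.inl rfl)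

lemma notMem_of_mem (h : G.IsNearSplit S K d) {k : V} (hk : k ∈ K) : k ∉ S :=
  h.notMem_iff.2 (.inr hk)

lemma notMem_right (h : G.IsNearSplit S K d) {s : V} (hs : s ∈ S) : s ∉ K :=
  fun hsK => h.notMem_of_mem hsK hs

lemma ne_of_mem (h : G.IsNearSplit S K d) {k : V} (hk : k ∈ K) : k ≠ d :=
  ne_of_mem_of_not_mem hk h.notMem

lemma not_forall_adj (h : G.IsNearSplit S K d) {s : V} (hs : s ∈ S) : ¬∀ c ∈ K, G.Adj s c := by
  obtain ⟨c, hc, hnadj⟩ := h.isNClique.exists_not_adj (h.notMem_right hs)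
  exact fun hadj => hnadj (hadj c hc)

lemma exists_adj_of_not_adj (hc : G.IsSumCritical) (h : G.IsNearSplit S K d) {k x : V}
    (hk : k ∈ K) (hx : x ∈ K) (hxk : x ≠ k) (hdx : ¬G.Adj d x) :
    ∃ s ∈ S, ∃ z, (∀ c ∉ S, c ≠ k → c ≠ z → G.Adj s c) ∧
      (z ≠ d → ∀ y ∈ K, y ≠ k → y ≠ z → G.Adj d y) := by
  -- A maximum clique `Q` avoiding `k` misses `#(Q ∩ S) ≤ 1` vertices of `Sᶜ \ {k}`, and it
  -- cannot miss none of them since `d` and `x` are not adjacent.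
  have : Nonempty V := ⟨k⟩
  obtain ⟨Q, hQ, hkQ⟩ := hc.exists_isNClique_notMem k
  have hX : #(Sᶜ.erase k) = G.cliqueNum := by
    rw [h.compl_eq, card_erase_of_mem (mem_insert_of_mem hk), card_insert_of_notMem h.notMem,
      h.isNClique.card_eq, Nat.add_sub_cancel]
  have hcount := card_compl_erase_sdiff hkQ (hQ.card_eq.trans hX.symm)
  have hmem (c : V) (hcS : c ∉ S) (hck : c ≠ k) (hcQ : c ∉ Q) : c ∈ Sᶜ.erase k \ Q := by
    simp [*]
  obtain ⟨s, hs⟩ : (Q ∩ S).Nonempty := by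
    rw [← card_pos, ← hcount, card_pos]
    by_contra hempty
    have hin (c : V) (hcS : c ∉ S) (hck : c ≠ k) : c ∈ Q :=
      by_contra fun hcQ => hempty ⟨c, hmem c hcS hck hcQ⟩
    exact hdx (hQ.isClique (hin d h.notMem_left (h.ne_of_mem hk).symm)
      (hin x (h.notMem_of_mem hx) hxk) (h.ne_of_mem hx).symm)
  obtain ⟨z, hz⟩ := card_le_one_iff_subset_singleton.1
    (hcount ▸ hQ.isClique.card_inter_le_one h.isNIndepSet.isIndepSet)
  have hin (c : V) (hcS : c ∉ S) (hck : c ≠ k) (hcz : c ≠ z) : c ∈ Q :=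
    by_contra fun hcQ => hcz (mem_singleton.1 (hz (hmem c hcS hck hcQ)))
  rw [mem_inter] at hs
  refine ⟨s, hs.2, z, fun c hcS hck hcz => ?_, fun hzd y hy hyk hyz => ?_⟩
  · exact hQ.isClique hs.1 (hin c hcS hck hcz) (ne_of_mem_of_not_mem hs.2 hcS)
  · exact hQ.isClique (hin d h.notMem_left (h.ne_of_mem hk).symm (Ne.symm hzd))
      (hin y (h.notMem_of_mem hy) hyk hyz) (h.ne_of_mem hy).symm

lemma exists_adj_of_forall_exists_not_adj (hc : G.IsSumCritical) (h : G.IsNearSplit S K d)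
    {k : V} (hk : k ∈ K) (hnadj : ∀ z, ∃ x ∈ K, x ≠ k ∧ x ≠ z ∧ ¬G.Adj d x) :
    ∃ s ∈ S, (∀ c ∈ K, c ≠ k → G.Adj s c) ∧ ¬G.Adj s k := by
  obtain ⟨x, hx, hxk, -, hdx⟩ := hnadj k
  obtain ⟨s, hs, z, hadj, hz⟩ := h.exists_adj_of_not_adj hc hk hx hxk hdx
  obtain rfl : z = d := by
    by_contra hzd
    obtain ⟨x', hx', hx'k, hx'z, hdx'⟩ := hnadj z
    exact hdx' (hz hzd x' hx' hx'k hx'z)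
  have hsK (c : V) (hc : c ∈ K) (hck : c ≠ k) : G.Adj s c :=
    hadj c (h.notMem_of_mem hc) hck (h.ne_of_mem hc)
  refine ⟨s, hs, hsK, fun hsk => h.not_forall_adj hs fun c hc => ?_⟩
  by_cases hck : c = k
  · exact hck ▸ hsk
  · exact hsK c hc hck

lemma exists_adj_or_adj_of_not_adj (hc : G.IsSumCritical) (h : G.IsNearSplit S K d) {k x : V}
    (hk : k ∈ K) (hx : x ∈ K) (hxk : x ≠ k) (hdx : ¬G.Adj d x) :
    ∃ s ∈ S, (∀ c ∈ K, c ≠ k → c ≠ x → G.Adj s c) ∧ (G.Adj s x ∨ G.Adj s d) := by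
  obtain ⟨s, hs, z, hadj, hz⟩ := h.exists_adj_of_not_adj hc hk hx hxk hdx
  by_cases hzd : z = d
  · subst hzd
    exact ⟨s, hs, fun c hc hck _ => hadj c (h.notMem_of_mem hc) hck (h.ne_of_mem hc),
      .inl (hadj x (h.notMem_of_mem hx) hxk (h.ne_of_mem hx))⟩
  · obtain rfl : z = x := by_contra fun hzx => hdx (hz hzd x hx hxk (Ne.symm hzx))
    exact ⟨s, hs, fun c hc hck hcz => hadj c (h.notMem_of_mem hc) hck hcz,
      .inr (hadj d h.notMem_left (h.ne_of_mem hk).symm (Ne.symm hzd))⟩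

lemma isNClique_insert_erase (h : G.IsNearSplit S K d) {x₀ : V} (hx₀ : x₀ ∈ K)
    (hd : ∀ y ∈ K, y ≠ x₀ → G.Adj d y) : G.IsNClique G.cliqueNum (insert d (K.erase x₀)) := by
  refine ⟨?_, ?_⟩
  · rw [coe_insert, isClique_insert]
    exact ⟨h.isNClique.isClique.subset (by simp),
      fun y hy _ => hd y (mem_of_mem_erase hy) (ne_of_mem_erase hy)⟩
  · rw [card_insert_of_notMem fun hd' => h.notMem (mem_of_mem_erase hd'),
      card_erase_of_mem hx₀, h.isNClique.card_eq]
    have := card_pos.2 ⟨x₀, hx₀⟩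
    rw [h.isNClique.card_eq] at this
    omega

lemma exists_adj_of_not_adj_unique (hc : G.IsSumCritical) (h : G.IsNearSplit S K d)
    {x₀ k : V} (hx₀ : x₀ ∈ K) (hdx₀ : ¬G.Adj d x₀) (hd : ∀ y ∈ K, y ≠ x₀ → G.Adj d y)
    (hk : k ∈ K) (hkx₀ : k ≠ x₀) :
    ∃ s ∈ S, (∀ c ∈ K, c ≠ k → c ≠ x₀ → G.Adj s c) ∧ (G.Adj s x₀ ∨ G.Adj s d) ∧
      ¬G.Adj s k := by
  obtain ⟨s, hs, hadj, hor⟩ := h.exists_adj_or_adj_of_not_adj hc hk hx₀ hkx₀.symm hdx₀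
  refine ⟨s, hs, hadj, hor, fun hsk => ?_⟩
  have hsK (c : V) (hc : c ∈ K) (hcx : c ≠ x₀) : G.Adj s c :=
    if hck : c = k then hck ▸ hsk else hadj c hc hck hcx
  rcases hor with hsx | hsd
  · exact h.not_forall_adj hs fun c hc => if hcx : c = x₀ then hcx ▸ hsx else hsK c hc hcx
  · have hsQ : s ∉ insert d (K.erase x₀) := by
      rw [mem_insert, not_or]
      exact ⟨fun hsd' => h.notMem_left (hsd' ▸ hs),
        fun hsK' => h.notMem_right hs (mem_of_mem_erase hsK')⟩
    obtain ⟨c, hc, hnadj⟩ := (h.isNClique_insert_erase hx₀ hd).exists_not_adj hsQ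
    rcases mem_insert.1 hc with rfl | hc
    · exact hnadj hsd
    · exact hnadj (hsK c (mem_of_mem_erase hc) (ne_of_mem_erase hc))

lemma card_le_two_of_isIndepSet (h : G.IsNearSplit S K d) {U : Finset V}
    (hUS : ∀ u ∈ U, u ∉ S) (hU : G.IsIndepSet (U : Set V)) : #U ≤ 2 := by
  have hsub : U ⊆ insert d (K ∩ U) := fun u hu => by
    rcases h.notMem_iff.1 (hUS u hu) with rfl | huK
    · exact mem_insert_self _ _
    · exact mem_insert_of_mem (mem_inter.2 ⟨huK, hu⟩)
  have := h.isNClique.isClique.card_inter_le_one hU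
  have := (card_le_card hsub).trans (card_insert_le _ _)
  omega

lemma exists_not_adj_of_isIndepSet (h : G.IsNearSplit S K d) {U : Finset V}
    (hUS : ∀ u ∈ U, u ∉ S) (hU : G.IsIndepSet (U : Set V)) (hU1 : 1 < #U) :
    d ∈ U ∧ ∃ x ∈ U, x ∈ K ∧ ¬G.Adj d x := by
  obtain ⟨u, hu, v, hv, huv⟩ := one_lt_card.1 hU1
  have hnadj : ¬G.Adj u v := hU hu hv huv
  rcases h.notMem_iff.1 (hUS u hu) with rfl | huK
  · rcases h.notMem_iff.1 (hUS v hv) with rfl | hvK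
    · exact absurd rfl huv
    · exact ⟨hu, v, hv, hvK, hnadj⟩
  · rcases h.notMem_iff.1 (hUS v hv) with rfl | hvK
    · exact ⟨hv, u, hu, huK, fun h' => hnadj h'.symm⟩
    · exact absurd (h.isNClique.isClique huK hvK huv) hnadj

lemma exists_private_or_pair (hc : G.IsSumCritical) (h : G.IsNearSplit S K d) {s : V}
    (hs : s ∈ S) :
    (∃ y ∉ S, ∀ t ∈ S, G.Adj y t ↔ t = s) ∨
      ∃ x ∈ K, ¬G.Adj d x ∧ ∃ T ⊆ S, #T ≤ 2 ∧ ∀ t ∈ S, G.Adj d t ∨ G.Adj x t → t ∈ T := by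
  -- Exchange with a maximum independent set `S'` avoiding `s`: the neighbours in `S` of
  -- `S' \ S` lie in `S \ S'`, which has the same size as `S' \ S` and contains `s`.
  obtain ⟨S', hS', hsS'⟩ := hc.exists_isNIndepSet_notMem s
  have hcard : #(S \ S') = #(S' \ S) := by
    have h1 := card_sdiff_add_card_inter S S'
    have h2 := card_sdiff_add_card_inter S' S
    rw [inter_comm, hS'.card_eq, ← h.isNIndepSet.card_eq] at h2
    omega
  have hUS : ∀ u ∈ S' \ S, u ∉ S := fun u hu => (mem_sdiff.1 hu).2
  have hU : G.IsIndepSet (↑(S' \ S) : Set V) := Set.Pairwise.mono (by simp) hS'.isIndepSet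
  have hN (u : V) (hu : u ∈ S' \ S) (t : V) (ht : t ∈ S) (hadj : G.Adj u t) : t ∈ S \ S' :=
    mem_sdiff.2 ⟨ht, fun htS' => hS'.isIndepSet (mem_sdiff.1 hu).1 htS' hadj.ne hadj⟩
  have hsT : s ∈ S \ S' := mem_sdiff.2 ⟨hs, hsS'⟩
  by_cases hU1 : 1 < #(S' \ S)
  · right
    obtain ⟨hdU, x, hxU, hx, hdx⟩ := h.exists_not_adj_of_isIndepSet hUS hU hU1
    refine ⟨x, hx, hdx, S \ S', sdiff_subset, ?_, fun t ht hadj => ?_⟩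
    · exact hcard ▸ h.card_le_two_of_isIndepSet hUS hU
    · exact hadj.elim (hN d hdU t ht) (hN x hxU t ht)
  · left
    obtain ⟨y, hy⟩ := card_eq_one.1 (show #(S' \ S) = 1 by have := card_pos.2 ⟨s, hsT⟩; omega)
    obtain ⟨s', hs'⟩ := card_eq_one.1 (hcard.trans (card_eq_one.2 ⟨y, hy⟩))
    have hyU : y ∈ S' \ S := hy ▸ mem_singleton_self y
    have hys (t : V) (ht : t ∈ S) (hyt : G.Adj y t) : t = s := by
      have := hN y hyU t ht hyt
      rw [hs', mem_singleton] at this hsT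
      exact this.trans hsT.symm
    refine ⟨y, hUS y hyU, fun t ht => ⟨hys t ht, ?_⟩⟩
    rintro rfl
    obtain ⟨t', ht', hyt'⟩ := h.isNIndepSet.exists_adj (hUS y hyU)
    exact hys t' ht' hyt' ▸ hyt'

lemma card_le_of_forall_exists_adj (hc : G.IsSumCritical) (h : G.IsNearSplit S K d)
    (Y : Finset V) (hY : ∀ y ∉ S, y ∉ Y → ∃ F ⊆ S, 1 < #F ∧ ∀ t ∈ F, G.Adj y t)
    (hD : ∀ x ∈ K, ¬G.Adj d x → ∃ F ⊆ S, 2 < #F ∧ ∀ t ∈ F, G.Adj d t ∨ G.Adj x t) :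
    #S ≤ #Y := by
  -- Every `s ∈ S` has a private neighbour `y ∈ Y`, whose only neighbour in `S` is `s`.
  refine card_le_card_of_forall_subsingleton (fun s y => ∀ t ∈ S, G.Adj y t ↔ t = s)
    (fun s hs => ?_) fun y _ s₁ hs₁ s₂ hs₂ => ?_
  · rcases h.exists_private_or_pair hc hs with ⟨y, hyS, hy⟩ | ⟨x, hx, hdx, T, -, hT, hTadj⟩
    · refine ⟨y, by_contra fun hyY => ?_, hy⟩
      obtain ⟨F, hFS, hF, hFadj⟩ := hY y hyS hyY
      have := card_le_card fun t ht => mem_singleton.2 ((hy t (hFS ht)).1 (hFadj t ht))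
      rw [card_singleton] at this
      omega
    · obtain ⟨F, hFS, hF, hFadj⟩ := hD x hx hdx
      have := card_le_card fun t ht => hTadj t (hFS ht) (hFadj t ht)
      omega
  · simp only [Set.mem_ofPred_eq] at hs₁ hs₂
    exact (hs₂.2 s₁ hs₁.1).1 ((hs₁.2 s₁ hs₁.1).2 rfl)

lemma exists_adj_subset_of_forall_exists_not_adj (hc : G.IsSumCritical)
    (h : G.IsNearSplit S K d) {P : Finset V} (hP : P ⊆ K)
    (hnadj : ∀ k ∈ P, ∀ z, ∃ x ∈ K, x ≠ k ∧ x ≠ z ∧ ¬G.Adj d x) {y : V} (hy : y ∈ K) :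
    ∃ F ⊆ S, #F = #(P.erase y) ∧ (∀ t ∈ F, G.Adj y t) ∧
      ∀ s, (∀ k ∈ P, G.Adj s k) → s ∉ F := by
  have : Nonempty V := ⟨d⟩
  choose! g hgS hgadj hgk using fun k (hk : k ∈ P) =>
    h.exists_adj_of_forall_exists_not_adj hc (hP hk) (hnadj k hk)
  refine ⟨(P.erase y).image g, image_subset_iff.2 fun k hk => hgS k (mem_of_mem_erase hk), ?_,
    fun t ht => ?_, fun s hs => ?_⟩
  · exact card_image_of_not_adj_of_adj (fun k hk => hgk k (mem_of_mem_erase hk))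
      fun k hk k' hk' hne => hgadj k (mem_of_mem_erase hk) k' (hP (mem_of_mem_erase hk')) hne.symm
  · obtain ⟨k, hk, rfl⟩ := mem_image.1 ht
    exact (hgadj k (mem_of_mem_erase hk) y hy (ne_of_mem_erase hk).symm).symm
  · exact notMem_image_of_not_adj_of_adj (fun k hk => hgk k (mem_of_mem_erase hk))
      fun k hk => hs k (mem_of_mem_erase hk)

lemma exists_adj_subset_insert (hc : G.IsSumCritical) (h : G.IsNearSplit S K d)
    {P : Finset V} (hP : P ⊆ K) (hnadj : ∀ k ∈ P, ∀ z, ∃ x ∈ K, x ≠ k ∧ x ≠ z ∧ ¬G.Adj d x)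
    {y s : V} (hy : y ∈ K) (hs : s ∈ S) (hsP : ∀ k ∈ P, G.Adj s k) :
    ∃ F ⊆ S, #F = #(P.erase y) + 1 ∧ ∀ t ∈ F, t = s ∨ G.Adj y t := by
  obtain ⟨F, hFS, hF, hFadj, hFs⟩ := h.exists_adj_subset_of_forall_exists_not_adj hc hP hnadj hy
  refine ⟨insert s F, insert_subset hs hFS, by rw [card_insert_of_notMem (hFs s hsP), hF],
    fun t ht => ?_⟩
  rcases mem_insert.1 ht with rfl | ht
  exacts [.inl rfl, .inr (hFadj t ht)]

lemma exists_adj_or_adj_subset (hc : G.IsSumCritical) (h : G.IsNearSplit S K d)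
    {P : Finset V} (hP : P ⊆ K) (hnadj : ∀ k ∈ P, ∀ z, ∃ x ∈ K, x ≠ k ∧ x ≠ z ∧ ¬G.Adj d x)
    {x s : V} (hx : x ∈ K) (hxP : x ∉ P) (hs : s ∈ S) (hsP : ∀ k ∈ P, G.Adj s k)
    (hsx : G.Adj s x ∨ G.Adj s d) : ∃ F ⊆ S, #F = #P + 1 ∧ ∀ t ∈ F, G.Adj d t ∨ G.Adj x t := by
  obtain ⟨F, hFS, hF, hFadj⟩ := h.exists_adj_subset_insert hc hP hnadj hx hs hsP
  refine ⟨F, hFS, by rw [hF, erase_eq_of_notMem hxP], fun t ht => ?_⟩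
  rcases hFadj t ht with rfl | hxt
  exacts [hsx.symm.imp (·.symm) (·.symm), .inr hxt]

lemma false_of_not_adj_unique (hc : G.IsSumCritical) (h : G.IsNearSplit S K d)
    (hw : 4 ≤ G.cliqueNum) {x₀ : V} (hx₀ : x₀ ∈ K) (hdx₀ : ¬G.Adj d x₀)
    (hd : ∀ y ∈ K, y ≠ x₀ → G.Adj d y) : False := by
  have : Nonempty V := ⟨d⟩
  choose! g hgS hgadj hgor hgk using fun k (hk : k ∈ K.erase x₀) =>
    h.exists_adj_of_not_adj_unique hc hx₀ hdx₀ hd (mem_of_mem_erase hk) (ne_of_mem_erase hk)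
  have hcard (P : Finset V) (hP : P ⊆ K.erase x₀) : #(P.image g) = #P :=
    card_image_of_not_adj_of_adj (fun k hk => hgk k (hP hk)) fun k hk k' hk' hne =>
      hgadj k (hP hk) k' (mem_of_mem_erase (hP hk')) hne.symm (ne_of_mem_erase (hP hk'))
  have himage (P : Finset V) (hP : P ⊆ K.erase x₀) : P.image g ⊆ S :=
    image_subset_iff.2 fun k hk => hgS k (hP hk)
  have hK' : #(K.erase x₀) = G.cliqueNum - 1 := by rw [card_erase_of_mem hx₀, h.isNClique.card_eq]
  have hS := card_le_card (himage _ subset_rfl)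
  rw [hcard _ subset_rfl, hK'] at hS
  have := h.card_le_of_forall_exists_adj hc {x₀, d} (fun y hyS hyY => ?_) fun x hx hdx => ?_
  · have := card_le_two (a := x₀) (b := d)
    omega
  · simp only [mem_insert, mem_singleton, not_or] at hyY
    have hyK : y ∈ K.erase x₀ := mem_erase.2 ⟨hyY.1, (h.notMem_iff.1 hyS).resolve_left hyY.2⟩
    refine ⟨((K.erase x₀).erase y).image g, himage _ (erase_subset _ _), ?_, ?_⟩
    · rw [hcard _ (erase_subset _ _), card_erase_of_mem hyK, hK']
      omega
    · simp only [mem_image, mem_erase]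
      rintro _ ⟨k, ⟨hky, hk⟩, rfl⟩
      exact (hgadj k (mem_erase.2 hk) y (mem_of_mem_erase hyK) (Ne.symm hky) hyY.1).symm
  · rw [show x = x₀ from by_contra fun hxx => hdx (hd x hx hxx)]
    refine ⟨(K.erase x₀).image g, himage _ subset_rfl, by rw [hcard _ subset_rfl, hK']; omega, ?_⟩
    simp only [mem_image]
    rintro _ ⟨k, hk, rfl⟩
    exact (hgor k hk).symm.imp (·.symm) (·.symm)

lemma false_of_not_adj_pair (hc : G.IsSumCritical) (h : G.IsNearSplit S K d)
    (hw : 4 ≤ G.cliqueNum) {x₁ x₂ : V} (hx₁ : x₁ ∈ K) (hx₂ : x₂ ∈ K) (hne : x₁ ≠ x₂)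
    (hdx₁ : ¬G.Adj d x₁) (hdx₂ : ¬G.Adj d x₂) (hd : ∀ y ∈ K, y ≠ x₁ → y ≠ x₂ → G.Adj d y) :
    False := by
  set K' := (K.erase x₁).erase x₂
  have hmem {k : V} : k ∈ K' ↔ k ≠ x₂ ∧ k ≠ x₁ ∧ k ∈ K := by simp [K']
  have hK' : #K' = G.cliqueNum - 2 := by
    rw [card_erase_of_mem (mem_erase.2 ⟨hne.symm, hx₂⟩), card_erase_of_mem hx₁,
      h.isNClique.card_eq, Nat.sub_sub]
  have hK'K : K' ⊆ K := fun k hk => (hmem.1 hk).2.2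
  have hnadj (k : V) (hk : k ∈ K') (z : V) : ∃ x ∈ K, x ≠ k ∧ x ≠ z ∧ ¬G.Adj d x :=
    if hz : x₁ = z then ⟨x₂, hx₂, (hmem.1 hk).1.symm, hz ▸ hne.symm, hdx₂⟩
    else ⟨x₁, hx₁, (hmem.1 hk).2.1.symm, hz, hdx₁⟩
  obtain ⟨s₁, hs₁, hs₁adj, hs₁or⟩ := h.exists_adj_or_adj_of_not_adj hc hx₁ hx₂ hne.symm hdx₂
  obtain ⟨s₂, hs₂, hs₂adj, hs₂or⟩ := h.exists_adj_or_adj_of_not_adj hc hx₂ hx₁ hne hdx₁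
  have hs₁K' (k : V) (hk : k ∈ K') : G.Adj s₁ k :=
    hs₁adj k (hmem.1 hk).2.2 (hmem.1 hk).2.1 (hmem.1 hk).1
  have hs₂K' (k : V) (hk : k ∈ K') : G.Adj s₂ k :=
    hs₂adj k (hmem.1 hk).2.2 (hmem.1 hk).1 (hmem.1 hk).2.1
  have := h.card_le_of_forall_exists_adj hc {d} (fun y hyS hyd => ?_) fun x hx hdx => ?_
  · obtain ⟨F, hFS, hF, -⟩ := h.exists_adj_subset_insert hc hK'K hnadj hx₁ hs₁ hs₁K'
    have := card_le_card hFS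
    rw [hF, erase_eq_of_notMem fun hx => (hmem.1 hx).2.1 rfl, hK', card_singleton] at *
    omega
  · have hy : y ∈ K := (h.notMem_iff.1 hyS).resolve_left (by simpa using hyd)
    by_cases hyK' : y ∈ K'
    · obtain ⟨F, hFS, hF, hFadj⟩ := h.exists_adj_subset_insert hc hK'K hnadj hy hs₁ hs₁K'
      refine ⟨F, hFS, by rw [hF, card_erase_of_mem hyK', hK']; omega, fun t ht => ?_⟩
      rcases hFadj t ht with rfl | hyt
      exacts [(hs₁K' y hyK').symm, hyt]
    · obtain ⟨F, hFS, hF, hFadj, -⟩ :=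
        h.exists_adj_subset_of_forall_exists_not_adj hc hK'K hnadj hy
      exact ⟨F, hFS, by rw [hF, erase_eq_of_notMem hyK', hK']; omega, hFadj⟩
  · have hxK' : x ∉ K' := fun hxK' => hdx (hd x hx (hmem.1 hxK').2.1 (hmem.1 hxK').1)
    obtain ⟨s, hs, hsK', hsx⟩ : ∃ s ∈ S, (∀ k ∈ K', G.Adj s k) ∧ (G.Adj s x ∨ G.Adj s d) := by
      by_cases hxx : x = x₁
      · exact ⟨s₂, hs₂, hs₂K', hxx ▸ hs₂or⟩
      · have hxx₂ : x = x₂ := by_contra fun hxx₂ => hdx (hd x hx hxx hxx₂)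
        exact ⟨s₁, hs₁, hs₁K', hxx₂ ▸ hs₁or⟩
    obtain ⟨F, hFS, hF, hFadj⟩ := h.exists_adj_or_adj_subset hc hK'K hnadj hx hxK' hs hsK' hsx
    exact ⟨F, hFS, by omega, hFadj⟩

lemma false_of_forall_exists_not_adj (hc : G.IsSumCritical) (h : G.IsNearSplit S K d)
    (hw : 4 ≤ G.cliqueNum) (hnadj : ∀ k z, ∃ x ∈ K, x ≠ k ∧ x ≠ z ∧ ¬G.Adj d x) : False := by
  have hfamily (y : V) (hy : y ∈ K) : ∃ F ⊆ S, 2 < #F ∧ ∀ t ∈ F, G.Adj y t := by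
    obtain ⟨F, hFS, hF, hFadj, -⟩ :=
      h.exists_adj_subset_of_forall_exists_not_adj hc subset_rfl (fun k _ => hnadj k) hy
    rw [card_erase_of_mem hy, h.isNClique.card_eq] at hF
    exact ⟨F, hFS, by omega, hFadj⟩
  obtain ⟨x₀, hx₀, -⟩ := hnadj d d
  obtain ⟨F₀, hF₀S, hF₀, -⟩ := hfamily x₀ hx₀
  have := h.card_le_of_forall_exists_adj hc {d} (fun y hyS hyd => ?_) fun x hx _ => ?_
  · have := card_le_card hF₀S
    rw [card_singleton] at *
    omega
  · obtain ⟨F, hFS, hF, hFadj⟩ :=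
      hfamily y ((h.notMem_iff.1 hyS).resolve_left (by simpa using hyd))
    exact ⟨F, hFS, by omega, hFadj⟩
  · obtain ⟨F, hFS, hF, hFadj⟩ := hfamily x hx
    exact ⟨F, hFS, hF, fun t ht => .inr (hFadj t ht)⟩

end IsNearSplit

theorem IsSumCritical.cliqueNum_le_three [Fintype V] (hc : G.IsSumCritical) : G.cliqueNum ≤ 3 := by
  classical
  by_contra! hw
  obtain ⟨S, K, d, h⟩ := hc.exists_isNearSplit hw
  set D := K.filter (¬G.Adj d ·)
  have hD (x : V) : x ∈ D ↔ x ∈ K ∧ ¬G.Adj d x := mem_filter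
  have hdK (y : V) (hy : y ∈ K) (hyD : y ∉ D) : G.Adj d y :=
    not_not.1 fun hdy => hyD ((hD y).2 ⟨hy, hdy⟩)
  obtain ⟨x, hx, hdx⟩ := h.isNClique.exists_not_adj h.notMem
  rcases (show #D = 1 ∨ #D = 2 ∨ 2 < #D by have := card_pos.2 ⟨x, (hD x).2 ⟨hx, hdx⟩⟩; omega)
    with hD1 | hD2 | hD3
  · obtain ⟨x₀, hx₀⟩ := card_eq_one.1 hD1
    have := (hD x₀).1 (hx₀ ▸ mem_singleton_self x₀)
    exact h.false_of_not_adj_unique hc hw this.1 this.2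
      fun y hy hyx => hdK y hy (by simpa [hx₀] using hyx)
  · obtain ⟨x₁, x₂, hne, hx₁₂⟩ := card_eq_two.1 hD2
    have h₁ := (hD x₁).1 (by simp [hx₁₂])
    have h₂ := (hD x₂).1 (by simp [hx₁₂])
    exact h.false_of_not_adj_pair hc hw h₁.1 h₂.1 hne h₁.2 h₂.2
      fun y hy hy₁ hy₂ => hdK y hy (by simp [hx₁₂, hy₁, hy₂])
  · refine h.false_of_forall_exists_not_adj hc hw fun k z => ?_
    obtain ⟨x, hxD, hx⟩ := exists_mem_notMem_of_card_lt_card (card_le_two.trans_lt hD3 :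
      #({k, z} : Finset V) < #D)
    simp only [mem_insert, mem_singleton, not_or] at hx
    exact ⟨x, ((hD x).1 hxD).1, hx.1, hx.2, ((hD x).1 hxD).2⟩

end SimpleGraph

/-- A minimal non-sum-perfect graph has `max {α, ω} ≤ 3` and hence at most 7 vertices. -/
theorem stmt17 {V : Type*} [Fintype V] (G : SimpleGraph V)
    (hG : MinimalNonSumPerfect G) :
    max (alphaNum G) (omegaNum G) ≤ 3 ∧ Fintype.card V ≤ 7 := by
  have hc := hG.isSumCritical
  have hω := hc.cliqueNum_le_three
  have hα : G.indepNum ≤ 3 := by simpa using hc.compl.cliqueNum_le_three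
  rw [alphaNum_eq_indepNum, omegaNum_eq_cliqueNum]
  exact ⟨max_le hα hω, by rw [hc.card_eq]; omega⟩
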